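/- Let F > 0, and set f(t) = 1/(π(t²+1)) and h(t) = -t/(π(t²+1)). Define T(x) = lim_{R→∞} ∫_{x}^{R} ( sin((x-t)/F²)·f(t) + cos((x-t)/F²)·h(t) ) dt. Then T(x) is well defined for every real x (the limit exists) and T(x) → 0 as x → +∞. -/

import Mathlib

/-!
With `u = (x - t) / c`, the integrand `sin u * f t + cos u * h t` is the `t`-derivative of
`c * (cos u * f t - sin u * h t)` minus `c * (cos u * f' t - sin u * h' t)`, and this remainder is
dominated by `|c| * (|f'| + |h'|)`, which is integrable and independent of `x`. Integrating by parts,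
`T x = -c * f x - ∫ t in Ioi x, c * (cos u * f' t - sin u * h' t)`, and both terms tend to `0`.
For the Cauchy kernel `f` and its Hilbert transform `h`, both `f'` and `h'` are `O(1 / (1 + t²))`.
-/

open Filter MeasureTheory Set
open Real Topology

theorem abs_cos_mul_sub_sin_mul_le (u p q : ℝ) : |cos u * p - sin u * q| ≤ |p| + |q| := by
  calc |cos u * p - sin u * q| ≤ |cos u| * |p| + |sin u| * |q| := by
        simpa only [abs_mul] using abs_sub (cos u * p) (sin u * q)
    _ ≤ 1 * |p| + 1 * |q| := by gcongr <;> simp only [abs_cos_le_one, abs_sin_le_one]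
    _ = |p| + |q| := by ring

theorem tendsto_intervalIntegral_of_hasDerivAt_add {E : Type*} [NormedAddCommGroup E]
    [NormedSpace ℝ E] [CompleteSpace E] {G g r : ℝ → E} {a : ℝ}
    (hG : ∀ t, HasDerivAt G (g t + r t) t) (hg : Continuous g) (hr : IntegrableOn r (Ioi a))
    (hG0 : Tendsto G atTop (𝓝 0)) :
    Tendsto (fun R => ∫ t in a..R, g t) atTop (𝓝 (-G a - ∫ t in Ioi a, r t)) := by
  have hparts : ∀ᶠ R in atTop, G R - G a - ∫ t in a..R, r t = ∫ t in a..R, g t := by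
    filter_upwards [eventually_ge_atTop a] with R haR
    have hrR : IntervalIntegrable r volume a R :=
      (intervalIntegrable_iff_integrableOn_Ioc_of_le haR).2 (hr.mono_set Ioc_subset_Ioi_self)
    rw [← intervalIntegral.integral_eq_sub_of_hasDerivAt (fun t _ => hG t)
      ((hg.intervalIntegrable a R).add hrR), intervalIntegral.integral_add
      (hg.intervalIntegrable a R) hrR, add_sub_cancel_right]
  have hlim := (hG0.sub_const (G a)).sub (intervalIntegral_tendsto_integral_Ioi a hr tendsto_id)
  rw [zero_sub] at hlim
  exact hlim.congr' hparts

theorem tendsto_setIntegral_Ioi_of_norm_le {E : Type*} [NormedAddCommGroup E]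
    [NormedSpace ℝ E] {r : ℝ → ℝ → E} {D : ℝ → ℝ} (hD : Integrable D)
    (hrD : ∀ x t, ‖r x t‖ ≤ D t) :
    Tendsto (fun x => ∫ t in Ioi x, r x t) atTop (𝓝 0) := by
  have hDtail : Tendsto (fun x => ∫ t in Ioi x, D t) atTop (𝓝 0) := by
    have := tendsto_setIntegral_of_antitone (fun x => measurableSet_Ioi)
      (fun _ _ hxy => Ioi_subset_Ioi hxy) ⟨0, hD.integrableOn⟩
    have hempty : ⋂ x : ℝ, Ioi x = ∅ := iInter_eq_empty_iff.2 fun y => ⟨y, lt_irrefl y⟩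
    rwa [hempty, Measure.restrict_empty, integral_zero_measure] at this
  exact squeeze_zero_norm
    (fun x => norm_integral_le_of_norm_le hD.integrableOn (ae_of_all _ (hrD x))) hDtail

section Oscillatory

variable {f h f' h' : ℝ → ℝ} {c : ℝ}

theorem hasDerivAt_mul_cos_mul_sub_sin_mul (hc : c ≠ 0) (x t : ℝ)
    (hf : HasDerivAt f (f' t) t) (hh : HasDerivAt h (h' t) t) :
    HasDerivAt (fun s => c * (cos ((x - s) / c) * f s - sin ((x - s) / c) * h s))
      ((sin ((x - t) / c) * f t + cos ((x - t) / c) * h t)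
        + c * (cos ((x - t) / c) * f' t - sin ((x - t) / c) * h' t)) t := by
  have hu : HasDerivAt (fun s => (x - s) / c) (-1 / c) t := by
    simpa [neg_div] using ((hasDerivAt_id t).const_sub x).div_const c
  refine (((hu.cos.fun_mul hf).fun_sub (hu.sin.fun_mul hh)).const_mul c).congr_deriv ?_
  field_simp
  ring

theorem exists_tendsto_intervalIntegral_sin_mul_add_cos_mul (hc : c ≠ 0)
    (hf : ∀ t, HasDerivAt f (f' t) t) (hh : ∀ t, HasDerivAt h (h' t) t)
    (hf' : Integrable f') (hh' : Integrable h')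
    (hf0 : Tendsto f atTop (𝓝 0)) (hh0 : Tendsto h atTop (𝓝 0)) :
    ∃ T : ℝ → ℝ,
      (∀ x, Tendsto (fun R => ∫ t in x..R, sin ((x - t) / c) * f t + cos ((x - t) / c) * h t)
        atTop (𝓝 (T x))) ∧ Tendsto T atTop (𝓝 0) := by
  set G : ℝ → ℝ → ℝ := fun x t => c * (cos ((x - t) / c) * f t - sin ((x - t) / c) * h t)
  set r : ℝ → ℝ → ℝ := fun x t => c * (cos ((x - t) / c) * f' t - sin ((x - t) / c) * h' t)
  have hr_le (x t : ℝ) : ‖r x t‖ ≤ |c| * (|f' t| + |h' t|) := by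
    rw [Real.norm_eq_abs, abs_mul]
    gcongr
    exact abs_cos_mul_sub_sin_mul_le _ _ _
  have hD : Integrable fun t => |c| * (|f' t| + |h' t|) := (hf'.abs.add hh'.abs).const_mul _
  have hr_int (x : ℝ) : Integrable (r x) := by
    have := hf'.aestronglyMeasurable
    have := hh'.aestronglyMeasurable
    exact hD.mono' (by fun_prop) (ae_of_all _ (hr_le x))
  have hG0 (x : ℝ) : Tendsto (G x) atTop (𝓝 0) := by
    refine squeeze_zero_norm (fun t => ?_) (by simpa using ((hf0.abs.add hh0.abs).const_mul |c|))
    rw [Real.norm_eq_abs, abs_mul]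
    gcongr
    exact abs_cos_mul_sub_sin_mul_le _ _ _
  refine ⟨fun x => -G x x - ∫ t in Ioi x, r x t, fun x => ?_, ?_⟩
  · refine tendsto_intervalIntegral_of_hasDerivAt_add
      (fun t => hasDerivAt_mul_cos_mul_sub_sin_mul hc x t (hf t) (hh t)) ?_
      (hr_int x).integrableOn (hG0 x)
    have := continuous_iff_continuousAt.2 fun t => (hf t).continuousAt
    have := continuous_iff_continuousAt.2 fun t => (hh t).continuousAt
    fun_prop
  · simpa [G] using (hf0.const_mul c).neg.sub (tendsto_setIntegral_Ioi_of_norm_le hD hr_le)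

end Oscillatory

theorem hasDerivAt_pi_mul_sq_add_one (t : ℝ) :
    HasDerivAt (fun s => π * (s ^ 2 + 1)) (π * (2 * t)) t := by
  simpa using ((hasDerivAt_pow 2 t).add_const 1).const_mul π

theorem hasDerivAt_one_div_pi_mul_sq_add_one (t : ℝ) :
    HasDerivAt (fun s => 1 / (π * (s ^ 2 + 1))) (-(2 * t) / (π * (t ^ 2 + 1) ^ 2)) t := by
  refine ((hasDerivAt_const t 1).div (hasDerivAt_pi_mul_sq_add_one t) (by positivity)).congr_deriv ?_
  field_simp
  ring

theorem hasDerivAt_neg_div_pi_mul_sq_add_one (t : ℝ) :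
    HasDerivAt (fun s => -s / (π * (s ^ 2 + 1))) ((t ^ 2 - 1) / (π * (t ^ 2 + 1) ^ 2)) t := by
  refine ((hasDerivAt_neg t).div (hasDerivAt_pi_mul_sq_add_one t) (by positivity)).congr_deriv ?_
  field_simp
  ring

theorem integrable_div_pi_mul_sq_add_one_sq {p : ℝ → ℝ} (hp : Continuous p)
    (hp_le : ∀ t, |p t| ≤ t ^ 2 + 1) :
    Integrable fun t => p t / (π * (t ^ 2 + 1) ^ 2) := by
  refine (integrable_inv_one_add_sq.const_mul π⁻¹).mono'
    (hp.div (by fun_prop) fun t => by positivity).aestronglyMeasurable (ae_of_all _ fun t => ?_)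
  have hpos : 0 < π * (t ^ 2 + 1) ^ 2 := by positivity
  rw [norm_div, Real.norm_eq_abs, Real.norm_of_nonneg hpos.le, div_le_iff₀ hpos]
  calc |p t| ≤ t ^ 2 + 1 := hp_le t
    _ = π⁻¹ * (1 + t ^ 2)⁻¹ * (π * (t ^ 2 + 1) ^ 2) := by field_simp; ring

theorem tendsto_one_div_pi_mul_sq_add_one :
    Tendsto (fun t : ℝ => 1 / (π * (t ^ 2 + 1))) atTop (𝓝 0) := by
  have : Tendsto (fun t : ℝ => π * (t ^ 2 + 1)) atTop atTop :=
    (tendsto_atTop_add_const_right _ 1 (tendsto_pow_atTop two_ne_zero)).const_mul_atTop pi_pos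
  exact this.inv_tendsto_atTop.congr fun t => (one_div _).symm

theorem tendsto_neg_div_pi_mul_sq_add_one :
    Tendsto (fun t : ℝ => -t / (π * (t ^ 2 + 1))) atTop (𝓝 0) := by
  refine squeeze_zero_norm' ?_ (by simpa using tendsto_inv_atTop_zero.const_mul π⁻¹)
  filter_upwards [eventually_gt_atTop 0] with t ht
  rw [norm_div, norm_neg, Real.norm_of_nonneg ht.le, Real.norm_of_nonneg (by positivity),
    div_le_iff₀ (by positivity)]
  calc t ≤ t + t⁻¹ := le_add_of_nonneg_right (by positivity)
    _ = π⁻¹ * t⁻¹ * (π * (t ^ 2 + 1)) := by field_simp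

/-- The tail integral `T(x) = ∫_x^∞ (sin((x-t)/F²)·f(t) + cos((x-t)/F²)·h(t)) dt` is
well defined as an improper integral and tends to `0` as `x → +∞`. -/
theorem tail_integral_tendsto_zero (F : ℝ) (hF : 0 < F)
    (f h : ℝ → ℝ)
    (hf : ∀ t : ℝ, f t = 1 / (Real.pi * (t ^ 2 + 1)))
    (hh : ∀ t : ℝ, h t = -t / (Real.pi * (t ^ 2 + 1))) :
    ∃ T : ℝ → ℝ,
      (∀ x : ℝ,
        Tendsto (fun R : ℝ =>
            ∫ t in x..R,
              Real.sin ((x - t) / F ^ 2) * f t + Real.cos ((x - t) / F ^ 2) * h t)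
          atTop (nhds (T x))) ∧
      Tendsto T atTop (nhds 0) := by
  obtain rfl : f = fun t => 1 / (π * (t ^ 2 + 1)) := funext hf
  obtain rfl : h = fun t => -t / (π * (t ^ 2 + 1)) := funext hh
  have h2t (t : ℝ) : |-(2 * t)| ≤ t ^ 2 + 1 := by
    rw [abs_neg, abs_mul, abs_two]
    nlinarith [sq_nonneg (|t| - 1), sq_abs t]
  have hsq (t : ℝ) : |t ^ 2 - 1| ≤ t ^ 2 + 1 := abs_le.2 ⟨by nlinarith [sq_nonneg t], by linarith⟩
  exact exists_tendsto_intervalIntegral_sin_mul_add_cos_mul (pow_pos hF 2).ne'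
    hasDerivAt_one_div_pi_mul_sq_add_one hasDerivAt_neg_div_pi_mul_sq_add_one
    (integrable_div_pi_mul_sq_add_one_sq (by fun_prop) h2t)
    (integrable_div_pi_mul_sq_add_one_sq (by fun_prop) hsq)
    tendsto_one_div_pi_mul_sq_add_one tendsto_neg_div_pi_mul_sq_add_one
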